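/- Let H = { x = E_1 E_2 E_3 ... : for each k ≥ 1, E_k ∈ {I_{2^k} A_{2^k}, O_{2^k} A_{2^k} I_{2^k} A_{2^k}} }, where A_n, O_n, I_n are the words from the construction A_1 = 10111, A_{n+1} = A_n O_n A_n I_n A_n. Then for every x ∈ H and every k ≥ 1, the finite prefix E_1 E_2 ... E_k is a suffix (tail) of the word A_{2^k + 1}; consequently H ⊆ ω(u, σ), where u = lim A_n. -/

import Mathlib

open Set Metric Filter TopologicalSpace

/-- The set of all `n`-fold compositions of members of `F = {f 0, …, f (m-1)}` applied to `x`. -/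
def iterSet {X : Type*} {m : ℕ} (f : Fin m → X → X) : ℕ → X → Set X
  | 0, x => {x}
  | n + 1, x => ⋃ i, iterSet f n (f i x)

/-- The words `A_n` over the alphabet `{0,1}` (`false = 0`, `true = 1`):
`A₁ = 10111` and `A_{n+1} = A_n O_n A_n I_n A_n`, where `O_n` (resp. `I_n`) is the constant-`0`
(resp. constant-`1`) word of the same length as `A_n`. (`Aword 0` is a dummy value.) -/
def Aword : ℕ → List Bool
  | 0 => []
  | 1 => [true, false, true, true, true]
  | n + 2 =>
      Aword (n + 1) ++ List.replicate (Aword (n + 1)).length false ++ Aword (n + 1)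
        ++ List.replicate (Aword (n + 1)).length true ++ Aword (n + 1)
def Sig2 : Type := ℕ → Bool

noncomputable def sdist (a b : Sig2) : ℝ :=
  ∑' i : ℕ, (if a i = b i then (0 : ℝ) else 1) / 2 ^ i

lemma sdist_term_nonneg (a b : Sig2) (i : ℕ) :
    0 ≤ (if a i = b i then (0 : ℝ) else 1) / 2 ^ i := by
  apply div_nonneg _ (by positivity)
  split <;> norm_num

lemma sdist_summable (a b : Sig2) :
    Summable fun i : ℕ => (if a i = b i then (0 : ℝ) else 1) / 2 ^ i := by
  refine Summable.of_nonneg_of_le (sdist_term_nonneg a b) (fun i => ?_)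
    summable_geometric_two
  rw [one_div, inv_pow, ← one_div]
  gcongr
  split <;> norm_num

noncomputable instance : MetricSpace Sig2 where
  dist := sdist
  dist_self a := by
    unfold sdist; simp
  dist_comm a b := by
    refine tsum_congr fun i => ?_
    by_cases h : a i = b i
    · rw [if_pos h, if_pos h.symm]
    · rw [if_neg h, if_neg fun h' => h h'.symm]
  dist_triangle a b c := by
    have key : ∀ i : ℕ, (if a i = c i then (0 : ℝ) else 1) / 2 ^ i ≤
        (if a i = b i then (0 : ℝ) else 1) / 2 ^ i
          + (if b i = c i then (0 : ℝ) else 1) / 2 ^ i := by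
      intro i
      by_cases hac : a i = c i
      · rw [if_pos hac, zero_div]
        exact add_nonneg (sdist_term_nonneg a b i) (sdist_term_nonneg b c i)
      · have h : ¬ a i = b i ∨ ¬ b i = c i := by
          by_contra hcon
          push_neg at hcon
          exact hac (hcon.1.trans hcon.2)
        rcases h with h | h
        · rw [if_neg hac, if_neg h]
          have := sdist_term_nonneg b c i
          linarith
        · rw [if_neg hac, if_neg h]
          have := sdist_term_nonneg a b i
          linarith
    calc sdist a c ≤ ∑' i : ℕ, ((if a i = b i then (0 : ℝ) else 1) / 2 ^ i
          + (if b i = c i then (0 : ℝ) else 1) / 2 ^ i) :=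
        (sdist_summable a c).tsum_le_tsum key ((sdist_summable a b).add (sdist_summable b c))
      _ = sdist a b + sdist b c := (sdist_summable a b).tsum_add (sdist_summable b c)
  eq_of_dist_eq_zero := by
    intro a b h
    funext i
    by_contra hne
    have hle := (sdist_summable a b).le_tsum i fun j _ => sdist_term_nonneg a b j
    rw [show (∑' i : ℕ, (if a i = b i then (0 : ℝ) else 1) / 2 ^ i) = 0 from h] at hle
    rw [if_neg hne] at hle
    have : (0 : ℝ) < 1 / 2 ^ i := by positivity
    exact absurd hle (not_le.mpr this)

/-- The shift map `σ` on `Σ₂`. -/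
def shiftS (x : Sig2) : Sig2 := fun n => x (n + 1)

/-- The ω-limit set of the point `u` under the shift `σ`. -/
def omegaLim (u : Sig2) : Set Sig2 :=
  ⋂ n : ℕ, closure {y : Sig2 | ∃ k : ℕ, n ≤ k ∧ y = shiftS^[k] u}

/-- The constant-`0` sequence `a = 000⋯`. -/
def aseq : Sig2 := fun _ => false

/-- The constant-`1` sequence `b = 111⋯`. -/
def bseq : Sig2 := fun _ => true

/-- The sequence `u` extending all the words `A_n`, viewed as a point of `Σ₂`. -/
def useqS : Sig2 := fun i => (Aword (i + 1)).getD i false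

/-- The multiple mapping `F = {σ, f₀}` where `f₀ ≡ a` is constant. -/
def Fsig : Fin 2 → Sig2 → Sig2 := ![shiftS, fun _ => aseq]

/-- The block `E_k`: either `I_{2^k} A_{2^k}` (choice `true`) or
`O_{2^k} A_{2^k} I_{2^k} A_{2^k}` (choice `false`). -/
def blockW (c : Bool) (k : ℕ) : List Bool :=
  if c then List.replicate (Aword (2 ^ k)).length true ++ Aword (2 ^ k)
  else List.replicate (Aword (2 ^ k)).length false ++ Aword (2 ^ k)
    ++ List.replicate (Aword (2 ^ k)).length true ++ Aword (2 ^ k)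

/-- The finite prefix `E_1 E_2 ⋯ E_k` determined by the choice sequence `c`. -/
def blocksPrefix (c : ℕ → Bool) (k : ℕ) : List Bool :=
  ((List.range k).map fun j => blockW (c (j + 1)) (j + 1)).flatten

/-- The element `x = E_1 E_2 E_3 ⋯` of `H` determined by the choice sequence `c`
(each block is nonempty, so position `i` lies inside `blocksPrefix c (i + 1)`). -/
def hseq (c : ℕ → Bool) : Sig2 := fun i => (blocksPrefix c (i + 1)).getD i false

/-!
Every `A_n` is both a prefix and a suffix of `A_{n+1} = A_n O_n A_n I_n A_n`. If `E_1 ⋯ E_k` is a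
tail of `A_{2^k+1}`, hence of `A_N` with `N = 2^{k+1}`, then appending `E_{k+1}` gives a tail of
`A_{N+1}`: for `E_{k+1} = I_N A_N` the old tail is placed at the end of the middle `A_N`, for
`E_{k+1} = O_N A_N I_N A_N` at the end of the first one. Since the `A_M` are prefixes of `u`, a tail of
`A_N` reappears in `u` arbitrarily far out (as a tail of every longer `A_M`), so every prefix of
`x ∈ H` is matched by `σ^p u` for arbitrarily large `p`, i.e. `x ∈ ω(u, σ)`.
-/

lemma List.IsPrefix.getD_eq {α : Type*} {l₁ l₂ : List α} (h : l₁ <+: l₂) {i : ℕ}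
    (hi : i < l₁.length) (d : α) : l₁.getD i d = l₂.getD i d := by
  obtain ⟨t, rfl⟩ := h
  rw [List.getD_append _ _ _ _ hi]

lemma Aword_length_succ (n : ℕ) : (Aword (n + 1)).length = 5 ^ (n + 1) := by
  induction n with
  | zero => simp [Aword]
  | succ n ih =>
    simp only [Aword, List.length_append, List.length_replicate, ih]
    ring

lemma Aword_succ_of_pos {n : ℕ} (hn : 0 < n) :
    Aword (n + 1) = Aword n ++ List.replicate (Aword n).length false ++ Aword n
      ++ List.replicate (Aword n).length true ++ Aword n := by
  obtain ⟨m, rfl⟩ := Nat.exists_eq_add_of_lt hn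
  rfl

lemma Aword_prefix_succ (n : ℕ) : Aword n <+: Aword (n + 1) := by
  rcases Nat.eq_zero_or_pos n with rfl | hn
  · exact List.nil_prefix
  · rw [Aword_succ_of_pos hn, List.append_assoc, List.append_assoc, List.append_assoc]
    exact List.prefix_append _ _

lemma Aword_suffix_succ (n : ℕ) : Aword n <:+ Aword (n + 1) := by
  rcases Nat.eq_zero_or_pos n with rfl | hn
  · exact List.nil_suffix
  · rw [Aword_succ_of_pos hn]
    exact List.suffix_append _ _

lemma Aword_prefix_of_le {n m : ℕ} (h : n ≤ m) : Aword n <+: Aword m :=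
  Nat.le_induction (List.prefix_refl _) (fun k _ ih => ih.trans (Aword_prefix_succ k)) m h

lemma Aword_suffix_of_le {n m : ℕ} (h : n ≤ m) : Aword n <:+ Aword m :=
  Nat.le_induction (List.suffix_refl _) (fun k _ ih => ih.trans (Aword_suffix_succ k)) m h

lemma useqS_eq_getD_Aword {M i : ℕ} (hi : i < (Aword M).length) :
    useqS i = (Aword M).getD i false := by
  have hi' : i < (Aword (i + 1)).length := by
    rw [Aword_length_succ]
    exact (Nat.lt_pow_self (by norm_num)).trans
      (Nat.pow_lt_pow_right (by norm_num) i.lt_succ_self)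
  rcases le_total (i + 1) M with h | h
  · exact (Aword_prefix_of_le h).getD_eq hi' false
  · exact ((Aword_prefix_of_le h).getD_eq hi false).symm

lemma exists_ge_useqS_eq_of_suffix_Aword {w : List Bool} {N : ℕ} (hw : w <:+ Aword N)
    (n : ℕ) : ∃ p ≥ n, ∀ i < w.length, w.getD i false = useqS (i + p) := by
  obtain ⟨s, hs⟩ := hw.trans (Aword_suffix_of_le (show N ≤ n + N + 1 by omega))
  have hlen : s.length + w.length = 5 ^ (n + N + 1) := by
    rw [← List.length_append, hs, Aword_length_succ]
  have hw_le : w.length ≤ 5 ^ (N + 1) := by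
    simpa [Aword_length_succ] using (hw.trans (Aword_suffix_succ N)).length_le
  have hn : (n + 1) * 5 ^ (N + 1) ≤ 5 ^ (n + N + 1) := by
    rw [Nat.add_assoc, pow_add 5 n]
    exact Nat.mul_le_mul_right _ (Nat.lt_pow_self (by norm_num : 1 < 5))
  refine ⟨s.length, by nlinarith [(by positivity : 0 < 5 ^ (N + 1))], fun i hi => ?_⟩
  rw [useqS_eq_getD_Aword (M := n + N + 1) (by rw [← hs]; simp; omega), ← hs,
    List.getD_append_right _ _ _ _ (by omega), Nat.add_sub_cancel]

section Blocks

variable (c : ℕ → Bool)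

lemma blocksPrefix_succ (k : ℕ) :
    blocksPrefix c (k + 1) = blocksPrefix c k ++ blockW (c (k + 1)) (k + 1) := by
  simp [blocksPrefix, List.range_succ]

lemma blockW_length_pos (b : Bool) (k : ℕ) : 0 < (blockW b k).length := by
  have h : 0 < (Aword (2 ^ k)).length := by
    rw [← Nat.sub_add_cancel (Nat.one_le_two_pow (n := k)), Aword_length_succ]
    positivity
  cases b <;> simp [blockW] <;> omega

lemma le_length_blocksPrefix (k : ℕ) : k ≤ (blocksPrefix c k).length := by
  induction k with
  | zero => simp
  | succ k ih =>
    rw [blocksPrefix_succ, List.length_append]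
    have := blockW_length_pos (c (k + 1)) (k + 1)
    omega

lemma blocksPrefix_prefix_of_le {k m : ℕ} (h : k ≤ m) :
    blocksPrefix c k <+: blocksPrefix c m :=
  Nat.le_induction (List.prefix_refl _)
    (fun j _ ih => ih.trans (blocksPrefix_succ c j ▸ List.prefix_append _ _)) m h

lemma hseq_eq_getD_blocksPrefix {m i : ℕ} (hi : i < (blocksPrefix c m).length) :
    hseq c i = (blocksPrefix c m).getD i false := by
  have hi' : i < (blocksPrefix c (i + 1)).length :=
    i.lt_succ_self.trans_le (le_length_blocksPrefix c (i + 1))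
  rcases le_total (i + 1) m with h | h
  · exact (blocksPrefix_prefix_of_le c h).getD_eq hi' false
  · exact ((blocksPrefix_prefix_of_le c h).getD_eq hi false).symm

lemma append_blockW_suffix_Aword {w : List Bool} (b : Bool) (k : ℕ) (hw : w <:+ Aword (2 ^ k)) :
    w ++ blockW b k <:+ Aword (2 ^ k + 1) := by
  obtain ⟨s, hs⟩ := hw
  rw [blockW, Aword_succ_of_pos (Nat.two_pow_pos k), ← hs]
  cases b
  · exact ⟨s, by simp⟩
  · exact ⟨s ++ w ++ List.replicate (s ++ w).length false ++ s, by simp⟩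

lemma blocksPrefix_suffix_Aword (k : ℕ) :
    blocksPrefix c k <:+ Aword (2 ^ k + 1) := by
  induction k with
  | zero => exact List.nil_suffix
  | succ k ih =>
    have hk : 2 ^ k + 1 ≤ 2 ^ (k + 1) := by
      rw [pow_succ]; linarith [Nat.one_le_two_pow (n := k)]
    rw [blocksPrefix_succ]
    exact append_blockW_suffix_Aword _ _ (ih.trans (Aword_suffix_of_le hk))

end Blocks

lemma shiftS_iterate_apply (p : ℕ) (x : Sig2) (i : ℕ) : (shiftS^[p] x) i = x (i + p) := by
  induction p generalizing i with
  | zero => rfl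
  | succ p ih =>
    rw [Function.iterate_succ_apply', shiftS, ih]
    congr 1
    omega

lemma dist_le_of_forall_lt_eq {a b : Sig2} {L : ℕ} (h : ∀ i < L, a i = b i) :
    dist a b ≤ 2 * (1 / 2 : ℝ) ^ L := by
  change sdist a b ≤ _
  rw [sdist, ← (sdist_summable a b).sum_add_tsum_nat_add L,
    Finset.sum_eq_zero fun i hi => by rw [if_pos (h i (Finset.mem_range.mp hi)), zero_div],
    zero_add]
  calc ∑' i, (if a (i + L) = b (i + L) then (0 : ℝ) else 1) / 2 ^ (i + L)
      ≤ ∑' i, (1 / 2 : ℝ) ^ L * (1 / 2) ^ i := by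
        refine ((summable_nat_add_iff L).mpr (sdist_summable a b)).tsum_le_tsum (fun i => ?_)
          (summable_geometric_two.mul_left _)
        rw [← pow_add, add_comm L, one_div_pow]
        gcongr
        split <;> norm_num
    _ = 2 * (1 / 2 : ℝ) ^ L := by rw [tsum_mul_left, tsum_geometric_two, mul_comm]

lemma mem_omegaLim_of_forall_exists_ge {x u : Sig2}
    (h : ∀ n L : ℕ, ∃ p ≥ n, ∀ i < L, x i = u (i + p)) : x ∈ omegaLim u := by
  refine mem_iInter.mpr fun n => Metric.mem_closure_iff.mpr fun ε hε => ?_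
  obtain ⟨L, hL⟩ := exists_pow_lt_of_lt_one (half_pos hε) (by norm_num : (1 / 2 : ℝ) < 1)
  obtain ⟨p, hpn, hp⟩ := h n L
  refine ⟨shiftS^[p] u, ⟨p, hpn, rfl⟩, ?_⟩
  calc dist x (shiftS^[p] u) ≤ 2 * (1 / 2 : ℝ) ^ L :=
        dist_le_of_forall_lt_eq fun i hi => by rw [shiftS_iterate_apply, hp i hi]
    _ < ε := by linarith

/-- For every choice sequence `c` (i.e. every `x ∈ H`) and every `k ≥ 1`, the finite prefix
`E_1 E_2 ⋯ E_k` is a suffix of the word `A_{2^k + 1}`; consequently every element of `H`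
belongs to `ω(u, σ)`. -/
theorem H_prefixes_are_tails_and_H_subset_omegaLimit :
    ∀ c : ℕ → Bool,
      (∀ k : ℕ, 1 ≤ k → blocksPrefix c k <:+ Aword (2 ^ k + 1)) ∧
      hseq c ∈ omegaLim useqS := by
  intro c
  refine ⟨fun k _ => blocksPrefix_suffix_Aword c k,
    mem_omegaLim_of_forall_exists_ge fun n L => ?_⟩
  obtain ⟨p, hpn, hp⟩ := exists_ge_useqS_eq_of_suffix_Aword (blocksPrefix_suffix_Aword c L) n
  have hL := le_length_blocksPrefix c L
  refine ⟨p, hpn, fun i hi => ?_⟩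
  rw [hseq_eq_getD_blocksPrefix c (m := L) (by omega), hp i (by omega)]
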